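/- arXiv:1004.3398 — 4 statements merged into one kernel-verified Lean document; each statement's English description precedes it below -/
import Mathlib

section
/- Fallback voting does not satisfy Unique-WARP: there exist a fallback voting election (C,V), a proper subset C' ⊂ C, and a candidate a ∈ C' such that a is the unique FV winner of (C,V) but a is not the unique FV winner of the restricted election (C',V). -/
/-!
Fallback voting (Brams and Sanver).  A vote is represented by the list of the
candidates the voter approves of, in order of preference (most preferred
first); all candidates not occurring in the list are disapproved.  The voter
collection is a multiset of such votes.
-/

namespace FV

variable {α : Type} [DecidableEq α]

/-- The level-`i` score of candidate `c` in the election with votes `V`: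
the number of voters who approve of `c` and rank `c` among their top `i`
approved candidates. -/
def levelScore (V : Multiset (List α)) (i : ℕ) (c : α) : ℕ :=
  (V.filter (fun v => c ∈ v.take i)).card

/-- The approval score of candidate `c`: the number of voters approving of `c`. -/
def apprScore (V : Multiset (List α)) (c : α) : ℕ :=
  (V.filter (fun v => c ∈ v)).card

/-- Restriction of the votes to the candidate set `C`: each voter's approval
set and ranking are restricted to `C`. -/
def restrict (C : Finset α) (V : Multiset (List α)) : Multiset (List α) :=
  V.map (fun v => v.filter (fun x => decide (x ∈ C)))

instance instDecMaj (C : Finset α) (V : Multiset (List α)) :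
    DecidablePred (fun i =>
      i ∈ Finset.Icc 1 C.card ∧ ∃ c ∈ C, 2 * levelScore V i c > Multiset.card V) :=
  fun _ => inferInstance

/-- The set of fallback-voting winners of the election `(C,V)`:
if some level `i` with `1 ≤ i ≤ ‖C‖` exists at which some candidate of `C`
has a strict majority (level-`i` score exceeding `‖V‖/2`), then the winners
are the candidates with the largest level-`i₀` score, where `i₀` is the
smallest such level; otherwise the winners are the candidates with the largest
approval score. -/
def winners (C : Finset α) (V : Multiset (List α)) : Finset α :=
  if h : ∃ i, i ∈ Finset.Icc 1 C.card ∧ ∃ c ∈ C, 2 * levelScore V i c > Multiset.card V then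
    C.filter (fun c => ∀ d ∈ C, levelScore V (Nat.find h) d ≤ levelScore V (Nat.find h) c)
  else
    C.filter (fun c => ∀ d ∈ C, apprScore V d ≤ apprScore V c)

/-- The FV winners of the election `(C,V)` restricted to the candidate set `C`. -/
def fwinners (C : Finset α) (V : Multiset (List α)) : Finset α :=
  winners C (restrict C V)

theorem winners_eq_of_first_majority_level {C : Finset α} {V : Multiset (List α)} {i : ℕ}
    (hi : i ∈ Finset.Icc 1 C.card ∧ ∃ c ∈ C, 2 * levelScore V i c > Multiset.card V)
    (hfirst : ∀ j < i,
      ¬ (j ∈ Finset.Icc 1 C.card ∧ ∃ c ∈ C, 2 * levelScore V j c > Multiset.card V)) :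
    winners C V = C.filter (fun c => ∀ d ∈ C, levelScore V i d ≤ levelScore V i c) := by
  rw [winners, dif_pos ⟨i, hi⟩, (Nat.find_eq_iff _).2 ⟨hi, hfirst⟩]

end FV

/- Over the candidates `{0, 1, 2, 3}` nobody has a majority of the nine voters at level 1, and
at level 2 candidate `0` (score 7) beats candidate `1` (score 6). Removing `2` and `3` lifts `1`
to the top of two more ballots, so in `({0, 1}, V)` it wins outright at level 1 with 6 votes. -/
def fvVotes : Multiset (List ℕ) :=
  ↑[[1, 0], [1, 0], [1, 0], [1, 0], [2, 1], [3, 1], [0], [0], [0]]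

theorem fwinners_fvVotes : FV.fwinners {0, 1, 2, 3} fvVotes = {0} := by
  rw [FV.fwinners, FV.winners_eq_of_first_majority_level (i := 2) (by decide) (by decide)]
  decide

theorem fwinners_pair_fvVotes : FV.fwinners {0, 1} fvVotes = {1} := by
  rw [FV.fwinners, FV.winners_eq_of_first_majority_level (i := 1) (by decide) (by decide)]
  decide

/-- Fallback voting does not satisfy Unique-WARP: there exist an FV election
`(C,V)` (with valid votes: duplicate-free and within `C`), a proper subset
`C' ⊂ C`, and a candidate `a ∈ C'` such that `a` is the unique FV winner of
`(C,V)` but not the unique FV winner of the restricted election `(C',V)`. -/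
theorem fv_not_uniqueWARP :
    ∃ (C C' : Finset ℕ) (V : Multiset (List ℕ)) (a : ℕ),
      (∀ v ∈ V, v.Nodup ∧ ∀ x ∈ v, x ∈ C) ∧
      C' ⊂ C ∧ a ∈ C' ∧
      FV.fwinners C V = {a} ∧
      FV.fwinners C' V ≠ {a} :=
  ⟨{0, 1, 2, 3}, {0, 1}, fvVotes, 0, by decide, by decide, by decide, fwinners_fvVotes,
    by rw [fwinners_pair_fvVotes]; decide⟩
end

section
/- Fallback voting is susceptible to destructive control by partition of candidates (with or without run-off, under both tie-handling rules TE and TP): there exist a fallback voting election (C,V), a candidate a ∈ C that is the unique FV winner of (C,V), and a partition of C into disjoint sets C1 and C2 such that the FV winner sets W1 of (C1,V) and W2 of (C2,V) are both singletons, a is not the unique FV winner of (W1 ∪ W2, V), and a is not the unique FV winner of (W1 ∪ C2, V). -/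
/-!
Take the seven votes `2 3 1`, `2 3 1`, `1 0`, `0`, `0`, `2 0`, `1` over the candidates
`{0,1,2,3}`. No candidate has a majority at level 1, and at level 2 only `0` does, so `0` is
the unique winner. Restricted to `C1 = {0,1}` the two votes `2 3 1` put `1` first, giving `1`
a level-1 majority, while `C2 = {2,3}` is won by `2` on approval. So `0` loses its subelection,
and a final round that does not contain `0` cannot have `0` as its unique winner.
-/

namespace FV

variable {α : Type} [DecidableEq α]

theorem winners_subset (C : Finset α) (V : Multiset (List α)) : winners C V ⊆ C := by
  unfold winners
  split_ifs <;> exact Finset.filter_subset _ _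

theorem fwinners_ne_singleton_of_notMem {C : Finset α} {a : α} (V : Multiset (List α))
    (ha : a ∉ C) : fwinners C V ≠ {a} := fun h =>
  ha (winners_subset C _ (h ▸ Finset.mem_singleton_self a))

theorem winners_eq_of_first_majority {C : Finset α} {V : Multiset (List α)} {i : ℕ}
    (hi : i ∈ Finset.Icc 1 C.card) (hmaj : ∃ c ∈ C, 2 * levelScore V i c > Multiset.card V)
    (hbelow : ∀ j ∈ Finset.Ico 1 i, ∀ c ∈ C, 2 * levelScore V j c ≤ Multiset.card V) :
    winners C V = C.filter (fun c => ∀ d ∈ C, levelScore V i d ≤ levelScore V i c) := by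
  have h : ∃ i, i ∈ Finset.Icc 1 C.card ∧ ∃ c ∈ C, 2 * levelScore V i c > Multiset.card V :=
    ⟨i, hi, hmaj⟩
  have hfind : Nat.find h = i := by
    refine (Nat.find_eq_iff h).2 ⟨⟨hi, hmaj⟩, fun j hj ⟨hj1, c, hc, hcj⟩ => ?_⟩
    have hj : j ∈ Finset.Ico 1 i := Finset.mem_Ico.2 ⟨(Finset.mem_Icc.1 hj1).1, hj⟩
    exact absurd (hbelow j hj c hc) (not_le.2 hcj)
  rw [winners, dif_pos h, hfind]

theorem winners_eq_of_no_majority {C : Finset α} {V : Multiset (List α)}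
    (h : ∀ i ∈ Finset.Icc 1 C.card, ∀ c ∈ C, 2 * levelScore V i c ≤ Multiset.card V) :
    winners C V = C.filter (fun c => ∀ d ∈ C, apprScore V d ≤ apprScore V c) := by
  refine dif_neg fun ⟨i, hi, c, hc, hci⟩ => ?_
  exact absurd (h i hi c hc) (not_le.2 hci)

end FV

/-- Fallback voting is susceptible to destructive control by partition of
candidates (with or without run-off, under both tie-handling rules TE and TP):
there are an FV election `(C,V)`, a candidate `a ∈ C` that is the unique FV
winner of `(C,V)`, and a partition of `C` into disjoint `C1` and `C2` such
that the FV winner sets of the subelections `(C1,V)` and `(C2,V)` are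
singletons `{w1}` and `{w2}`, `a` is not the unique FV winner of the run-off
final round `({w1} ∪ {w2}, V)`, and `a` is not the unique FV winner of the
final round `({w1} ∪ C2, V)` without run-off. -/
theorem fv_susceptible_destructive_partition_candidates :
    ∃ (C C1 C2 : Finset ℕ) (V : Multiset (List ℕ)) (a w1 w2 : ℕ),
      (∀ v ∈ V, v.Nodup ∧ ∀ x ∈ v, x ∈ C) ∧
      a ∈ C ∧ FV.fwinners C V = {a} ∧
      Disjoint C1 C2 ∧ C1 ∪ C2 = C ∧
      FV.fwinners C1 V = {w1} ∧ FV.fwinners C2 V = {w2} ∧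
      FV.fwinners ({w1, w2} : Finset ℕ) V ≠ {a} ∧
      FV.fwinners ({w1} ∪ C2) V ≠ {a} := by
  let V : Multiset (List ℕ) := {[2, 3, 1], [2, 3, 1], [1, 0], [0], [0], [2, 0], [1]}
  refine ⟨{0, 1, 2, 3}, {0, 1}, {2, 3}, V, 0, 1, 2, by decide, by decide, ?_, by decide,
    by decide, ?_, ?_, FV.fwinners_ne_singleton_of_notMem V (by decide),
    FV.fwinners_ne_singleton_of_notMem V (by decide)⟩
  · rw [FV.fwinners, FV.winners_eq_of_first_majority (i := 2) (by decide) (by decide) (by decide)]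
    decide
  · rw [FV.fwinners, FV.winners_eq_of_first_majority (i := 1) (by decide) (by decide) (by decide)]
    decide
  · rw [FV.fwinners, FV.winners_eq_of_no_majority (by decide)]
    decide
end

section
/- Fallback voting is susceptible to constructive control by partition of candidates (with or without run-off, under both tie-handling rules TE and TP): there exist a fallback voting election (C,V), a candidate c ∈ C that is not the unique FV winner of (C,V), and a partition of C into disjoint sets C1 and C2 such that the FV winner sets W1 of (C1,V) and W2 of (C2,V) are both singletons, c is the unique FV winner of (W1 ∪ W2, V), and c is the unique FV winner of (W1 ∪ C2, V). -/
/-!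
Five voters cast `[1], [1], [2, 0], [2, 0], [0, 1]`. In the full election nobody has a
level-1 majority and `0`, `1` tie at level 2 with three votes each. In the subelection
on `{1, 2}` the restricted votes give `1` a level-1 majority, and `0` wins `{0}` alone.
With `2` eliminated, the two votes `[2, 0]` rank `0` first, so `0` has a level-1
majority in the final round `{1, 0}`.
-/

namespace FV

variable {α : Type} [DecidableEq α]

theorem winners_eq_of_least_majority_level {C : Finset α} {V : Multiset (List α)} {i : ℕ}
    (hi : i ∈ Finset.Icc 1 C.card) (hmaj : ∃ c ∈ C, 2 * levelScore V i c > Multiset.card V)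
    (hbelow : ∀ j < i,
      ¬ (j ∈ Finset.Icc 1 C.card ∧ ∃ c ∈ C, 2 * levelScore V j c > Multiset.card V)) :
    winners C V = C.filter (fun c => ∀ d ∈ C, levelScore V i d ≤ levelScore V i c) := by
  have h : ∃ i, i ∈ Finset.Icc 1 C.card ∧ ∃ c ∈ C, 2 * levelScore V i c > Multiset.card V :=
    ⟨i, hi, hmaj⟩
  rw [winners, dif_pos h, (Nat.find_eq_iff h).2 ⟨⟨hi, hmaj⟩, hbelow⟩]

theorem winners_eq_of_majority_at_level_one {C : Finset α} {V : Multiset (List α)}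
    (hmaj : ∃ c ∈ C, 2 * levelScore V 1 c > Multiset.card V) :
    winners C V = C.filter (fun c => ∀ d ∈ C, levelScore V 1 d ≤ levelScore V 1 c) := by
  obtain ⟨c, hc, -⟩ := id hmaj
  refine winners_eq_of_least_majority_level ?_ hmaj fun j hj h => ?_
  · exact Finset.mem_Icc.2 ⟨le_rfl, Finset.card_pos.2 ⟨c, hc⟩⟩
  · have := (Finset.mem_Icc.1 h.1).1
    omega

end FV

/-- Fallback voting is susceptible to constructive control by partition of
candidates (with or without run-off, under both tie-handling rules TE and TP):
there are an FV election `(C,V)`, a candidate `c ∈ C` that is not the unique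
FV winner of `(C,V)`, and a partition of `C` into disjoint `C1` and `C2` such
that the FV winner sets of the subelections `(C1,V)` and `(C2,V)` are
singletons `{w1}` and `{w2}`, `c` is the unique FV winner of the run-off final
round `({w1} ∪ {w2}, V)`, and `c` is the unique FV winner of the final round
`({w1} ∪ C2, V)` without run-off. -/
theorem fv_susceptible_constructive_partition_candidates :
    ∃ (C C1 C2 : Finset ℕ) (V : Multiset (List ℕ)) (c w1 w2 : ℕ),
      (∀ v ∈ V, v.Nodup ∧ ∀ x ∈ v, x ∈ C) ∧
      c ∈ C ∧ FV.fwinners C V ≠ {c} ∧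
      Disjoint C1 C2 ∧ C1 ∪ C2 = C ∧
      FV.fwinners C1 V = {w1} ∧ FV.fwinners C2 V = {w2} ∧
      FV.fwinners ({w1, w2} : Finset ℕ) V = {c} ∧
      FV.fwinners ({w1} ∪ C2) V = {c} := by
  refine ⟨{0, 1, 2}, {1, 2}, {0}, {[1], [1], [2, 0], [2, 0], [0, 1]}, 0, 1, 0,
    by decide, by decide, ?_, by decide, by decide, ?_, ?_, ?_, ?_⟩
  · rw [FV.fwinners, FV.winners_eq_of_least_majority_level (i := 2) (by decide) (by decide)
      (by decide)]
    decide
  all_goals rw [FV.fwinners, FV.winners_eq_of_majority_at_level_one (by decide)]; decide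
end

section
/- Fallback voting is susceptible to destructive control by partition of voters (under both tie-handling rules TE and TP): there exist a fallback voting election (C,V), a candidate a ∈ C that is the unique FV winner of (C,V), and a partition of V into disjoint sublists V1 and V2 such that each subelection (C,V1) and (C,V2) has a unique FV winner, both of these winners are different from a, and hence a does not belong to the candidate set W1 ∪ W2 of the final round (W1 ∪ W2, V), where Wi is the set of FV winners of (C,Vi). -/
/-!
Take candidates `a = 0`, `1`, `2` and the six votes `1 a`, `1`, `a`, `2 a`, `2`, `a`. At level 1
every candidate has two of six votes, so there is no majority; at level 2 the candidate `a`
has four, so `a` is the unique winner. In each of the halves `{1 a, 1, a}` and `{2 a, 2, a}`,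
however, the outer candidate already has a level-1 majority of two out of three.
-/

namespace FV

variable {α : Type} [DecidableEq α]

theorem winners_eq_singleton_of_first_majority {C : Finset α} {V : Multiset (List α)} {i : ℕ}
    {a : α} (hi : i ∈ Finset.Icc 1 C.card) (ha : a ∈ C)
    (hmaj : 2 * levelScore V i a > Multiset.card V)
    (hbelow : ∀ j < i, ∀ c ∈ C, 2 * levelScore V j c ≤ Multiset.card V)
    (hbest : ∀ d ∈ C, d ≠ a → levelScore V i d < levelScore V i a) :
    winners C V = {a} := by
  have h : ∃ i, i ∈ Finset.Icc 1 C.card ∧ ∃ c ∈ C, 2 * levelScore V i c > Multiset.card V :=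
    ⟨i, hi, a, ha, hmaj⟩
  have hfind : Nat.find h = i := (Nat.find_eq_iff h).2
    ⟨⟨hi, a, ha, hmaj⟩, fun j hj ⟨_, c, hc, hcmaj⟩ => (hbelow j hj c hc).not_gt hcmaj⟩
  rw [winners, dif_pos h, hfind]
  ext c
  simp only [Finset.mem_filter, Finset.mem_singleton]
  constructor
  · rintro ⟨hc, hmax⟩
    by_contra hca
    exact (hbest c hc hca).not_ge (hmax a ha)
  · rintro rfl
    refine ⟨ha, fun d hd => ?_⟩
    rcases eq_or_ne d c with rfl | hdc
    · exact le_rfl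
    · exact (hbest d hd hdc).le

end FV

/-- Fallback voting is susceptible to destructive control by partition of
voters (under both tie-handling rules TE and TP): there are an FV election
`(C,V)`, a candidate `a ∈ C` that is the unique FV winner of `(C,V)`, and a
partition of `V` into disjoint sublists `V1` and `V2` such that each
subelection `(C,V1)` and `(C,V2)` has a unique FV winner, both of these
winners differ from `a`, and hence `a` does not belong to the candidate set
`W1 ∪ W2` of the final round. -/
theorem fv_susceptible_destructive_partition_voters :
    ∃ (C : Finset ℕ) (V V1 V2 : Multiset (List ℕ)) (a w1 w2 : ℕ),
      (∀ v ∈ V, v.Nodup ∧ ∀ x ∈ v, x ∈ C) ∧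
      a ∈ C ∧ FV.fwinners C V = {a} ∧
      V1 + V2 = V ∧
      FV.fwinners C V1 = {w1} ∧ FV.fwinners C V2 = {w2} ∧
      w1 ≠ a ∧ w2 ≠ a ∧ a ∉ ({w1, w2} : Finset ℕ) := by
  refine ⟨{0, 1, 2}, {[1, 0], [1], [0]} + {[2, 0], [2], [0]}, {[1, 0], [1], [0]},
    {[2, 0], [2], [0]}, 0, 1, 2, by decide, by decide, ?_, rfl, ?_, ?_, by decide, by decide,
    by decide⟩
  · exact FV.winners_eq_singleton_of_first_majority (i := 2) (by decide) (by decide) (by decide)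
      (by decide) (by decide)
  · exact FV.winners_eq_singleton_of_first_majority (i := 1) (by decide) (by decide) (by decide)
      (by decide) (by decide)
  · exact FV.winners_eq_singleton_of_first_majority (i := 1) (by decide) (by decide) (by decide)
      (by decide) (by decide)
end
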